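/- arXiv:1910.00708 — 2 statements merged into one kernel-verified Lean document; each statement's English description precedes it below -/
import Mathlib

section
/- Let A0, A1, B0, B1 be nonempty finite index types and Θ : (Matrix A0 A0 ℂ →ₗ Matrix A1 A1 ℂ) →ₗ (Matrix B0 B0 ℂ →ₗ Matrix B1 B1 ℂ) a linear supermap. Then Θ satisfies the MISC condition Δ_B ∘ Θ ∘ Δ_A = Θ ∘ Δ_A if and only if its Choi matrix satisfies 𝒟_{AB}(𝐉(Θ)) = (𝒟_A ⊗ id_B)(𝐉(Θ)), where 𝒟_{AB} is the full dephasing on the index (A0×A1)×(B0×B1) and (𝒟_A ⊗ id_B) dephases only the first (A0×A1)-factor. -/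
open Matrix Kronecker ComplexOrder

noncomputable section

/-- Dephasing (decoherence) map as a linear map. -/
def deph {ι : Type*} [DecidableEq ι] : Matrix ι ι ℂ →ₗ[ℂ] Matrix ι ι ℂ where
  toFun M := Matrix.of fun i j => if i = j then M i j else 0
  map_add' X Y := by
    ext i j
    by_cases h : i = j <;> simp [h]
  map_smul' c X := by
    ext i j
    by_cases h : i = j <;> simp [h]

/-- Choi matrix of a linear map between matrix algebras. -/
def choi {ι κ : Type*} [Fintype ι] [DecidableEq ι]
    (Φ : Matrix ι ι ℂ →ₗ[ℂ] Matrix κ κ ℂ) : Matrix (ι × κ) (ι × κ) ℂ :=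
  Matrix.of fun p q => Φ (Matrix.single p.1 q.1 1) p.2 q.2

variable {A0 A1 B0 B1 : Type*}

/-- The canonical basis maps `E^{ijkl}(ρ) = ρ i j • E_{kl}`. -/
def basisMap [DecidableEq A1] (i j : A0) (k l : A1) :
    Matrix A0 A0 ℂ →ₗ[ℂ] Matrix A1 A1 ℂ where
  toFun ρ := ρ i j • Matrix.single k l 1
  map_add' X Y := by simp [add_smul]
  map_smul' c X := by simp [smul_smul]

/-- Choi matrix of a supermap:
`𝐉(Θ) = Σ_{i,j,k,l} J(E^{ijkl}) ⊗ₖ J(Θ[E^{ijkl}])`. -/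
def superChoi [Fintype A0] [DecidableEq A0] [Fintype A1] [DecidableEq A1]
    [Fintype B0] [DecidableEq B0]
    (Θ : (Matrix A0 A0 ℂ →ₗ[ℂ] Matrix A1 A1 ℂ) → (Matrix B0 B0 ℂ →ₗ[ℂ] Matrix B1 B1 ℂ)) :
    Matrix ((A0 × A1) × (B0 × B1)) ((A0 × A1) × (B0 × B1)) ℂ :=
  ∑ i : A0, ∑ j : A0, ∑ k : A1, ∑ l : A1,
    (choi (basisMap i j k l)) ⊗ₖ (choi (Θ (basisMap i j k l)))

/-- Partial dephasing of the first tensor factor of the index. -/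
def dephFst {α β : Type*} [DecidableEq α] (M : Matrix (α × β) (α × β) ℂ) :
    Matrix (α × β) (α × β) ℂ :=
  Matrix.of fun p q => if p.1 = q.1 then M p q else 0

/-- Partial dephasing of the second tensor factor of the index. -/
def dephSnd {α β : Type*} [DecidableEq β] (M : Matrix (α × β) (α × β) ℂ) :
    Matrix (α × β) (α × β) ℂ :=
  Matrix.of fun p q => if p.2 = q.2 then M p q else 0


lemma stdbm_apply {ι : Type*} [DecidableEq ι] (i j a b : ι) :
    (Matrix.single i j (1:ℂ)) a b = if i = a ∧ j = b then 1 else 0 := rfl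

lemma deph_apply {ι : Type*} [DecidableEq ι] (M : Matrix ι ι ℂ) (a b : ι) :
    deph M a b = if a = b then M a b else 0 := rfl

lemma deph_eq_sum {ι : Type*} [Fintype ι] [DecidableEq ι] (M : Matrix ι ι ℂ) :
    deph M = ∑ i : ι, M i i • Matrix.single i i 1 := by
  ext a b
  simp only [deph_apply, Matrix.sum_apply, Matrix.smul_apply, stdbm_apply, smul_eq_mul]
  by_cases h : a = b
  · subst h; simp
  · rw [if_neg h]
    symm; apply Finset.sum_eq_zero; intro x _
    rw [if_neg (by rintro ⟨rfl, rfl⟩; exact h rfl), mul_zero]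

-- superChoi entry formula
lemma superChoi_apply [Fintype A0] [DecidableEq A0] [Fintype A1] [DecidableEq A1]
    [Fintype B0] [DecidableEq B0]
    (Θ : (Matrix A0 A0 ℂ →ₗ[ℂ] Matrix A1 A1 ℂ) → (Matrix B0 B0 ℂ →ₗ[ℂ] Matrix B1 B1 ℂ))
    (i j : A0) (k l : A1) (b b' : B0 × B1) :
    superChoi Θ ((i,k),b) ((j,l),b') = choi (Θ (basisMap i j k l)) b b' := by
  simp only [superChoi, Matrix.sum_apply, kroneckerMap_apply]
  have hfst : ∀ (i' j' : A0) (k' l' : A1),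
      choi (basisMap i' j' k' l') (i, k) (j, l)
        = if i' = i ∧ j' = j ∧ k' = k ∧ l' = l then 1 else 0 := by
    intro i' j' k' l'
    simp only [choi, Matrix.of_apply, basisMap, LinearMap.coe_mk, AddHom.coe_mk,
      Matrix.smul_apply, stdbm_apply, smul_eq_mul]
    by_cases h : i' = i ∧ j' = j ∧ k' = k ∧ l' = l
    · obtain ⟨rfl, rfl, rfl, rfl⟩ := h; simp
    · rw [if_neg h]
      by_cases h1 : i = i' ∧ j = j'
      · rw [if_pos h1, one_mul,
          if_neg (by rintro ⟨rfl, rfl⟩; exact h ⟨h1.1.symm, h1.2.symm, rfl, rfl⟩)]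
      · rw [if_neg h1, zero_mul]
  simp only [hfst, ite_mul, one_mul, zero_mul]
  rw [Finset.sum_eq_single_of_mem i (Finset.mem_univ i) ?hi,
      Finset.sum_eq_single_of_mem j (Finset.mem_univ j) ?hj,
      Finset.sum_eq_single_of_mem k (Finset.mem_univ k) ?hk,
      Finset.sum_eq_single_of_mem l (Finset.mem_univ l) ?hl]
  · simp
  case hl => intro x _ hx; simp [hx]
  case hk => intro x _ hx; exact Finset.sum_eq_zero fun y _ => by simp [hx]
  case hj =>
    intro x _ hx
    exact Finset.sum_eq_zero fun y _ => Finset.sum_eq_zero fun z _ => by simp [hx]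
  case hi =>
    intro x _ hx
    exact Finset.sum_eq_zero fun y _ => Finset.sum_eq_zero fun z _ =>
      Finset.sum_eq_zero fun w _ => by simp [hx]

-- deph ∘ basisMap i i k k ∘ deph = basisMap i i k k
lemma deph_basisMap [Fintype A0] [DecidableEq A0] [DecidableEq A1] (i : A0) (k : A1) :
    deph ∘ₗ basisMap i i k k ∘ₗ deph = (basisMap i i k k : Matrix A0 A0 ℂ →ₗ[ℂ] Matrix A1 A1 ℂ) := by
  apply LinearMap.ext; intro ρ
  ext a b
  simp only [LinearMap.comp_apply, deph_apply, basisMap, LinearMap.coe_mk, AddHom.coe_mk,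
    Matrix.smul_apply, stdbm_apply, smul_eq_mul]
  by_cases h : a = b
  · subst h; simp
  · rw [if_neg h, if_neg (by rintro ⟨rfl, rfl⟩; exact h rfl), mul_zero]

-- decomposition
lemma deph_comp_decomp [Fintype A0] [DecidableEq A0] [Fintype A1] [DecidableEq A1]
    (N : Matrix A0 A0 ℂ →ₗ[ℂ] Matrix A1 A1 ℂ) :
    deph ∘ₗ N ∘ₗ deph = ∑ i : A0, ∑ k : A1,
      (N (Matrix.single i i 1) k k) • basisMap i i k k := by
  apply LinearMap.ext; intro ρ
  have hN : N (deph ρ) = ∑ i : A0, ρ i i • N (Matrix.single i i 1) := by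
    rw [deph_eq_sum, map_sum]
    exact Finset.sum_congr rfl fun i _ => N.map_smul _ _
  ext a b
  simp only [LinearMap.comp_apply, LinearMap.sum_apply, LinearMap.smul_apply,
    deph_apply, hN, Matrix.sum_apply, Matrix.smul_apply, basisMap,
    LinearMap.coe_mk, AddHom.coe_mk, stdbm_apply, smul_eq_mul]
  by_cases h : a = b
  · subst h
    simp only [if_pos rfl]
    apply Finset.sum_congr rfl; intro i _
    rw [Finset.sum_eq_single a]
    · simp [mul_comm]
    · intro x _ hx; rw [if_neg (by rintro ⟨rfl, _⟩; exact hx rfl)]; ring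
    · intro h'; exact absurd (Finset.mem_univ _) h'
  · rw [if_neg h]
    symm; apply Finset.sum_eq_zero; intro i _
    apply Finset.sum_eq_zero; intro x _
    rw [if_neg (by rintro ⟨rfl, rfl⟩; exact h rfl)]; ring

lemma choi_deph {ι κ : Type*} [Fintype ι] [DecidableEq ι] [DecidableEq κ]
    (Φ : Matrix ι ι ℂ →ₗ[ℂ] Matrix κ κ ℂ) (p q : ι × κ) :
    choi (deph ∘ₗ Φ ∘ₗ deph) p q = if p = q then choi Φ p q else 0 := by
  obtain ⟨b0, b1⟩ := p; obtain ⟨b0', b1'⟩ := q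
  have hd : (deph (Matrix.single b0 b0' 1) : Matrix ι ι ℂ)
      = if b0 = b0' then Matrix.single b0 b0' 1 else 0 := by
    by_cases h2 : b0 = b0'
    · subst h2
      rw [if_pos rfl]
      ext a b
      simp only [deph_apply, stdbm_apply]
      by_cases h : a = b
      · subst h; simp
      · rw [if_neg h, if_neg (by rintro ⟨rfl, rfl⟩; exact h rfl)]
    · rw [if_neg h2]
      ext a b
      simp only [deph_apply, stdbm_apply, Matrix.zero_apply]
      by_cases h : a = b
      · subst h; rw [if_pos rfl, if_neg (by rintro ⟨rfl, rfl⟩; exact h2 rfl)]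
      · rw [if_neg h]
  simp only [choi, Matrix.of_apply, LinearMap.comp_apply, hd]
  by_cases h2 : b0 = b0' <;> by_cases h1 : b1 = b1' <;>
    simp [deph_apply, h1, h2, Prod.ext_iff]

lemma choi_inj {ι κ : Type*} [Fintype ι] [DecidableEq ι] [Fintype κ] [DecidableEq κ]
    {Φ Ψ : Matrix ι ι ℂ →ₗ[ℂ] Matrix κ κ ℂ} (h : choi Φ = choi Ψ) : Φ = Ψ := by
  apply LinearMap.ext; intro M
  have hstd : ∀ i j : ι, Φ (Matrix.single i j 1) = Ψ (Matrix.single i j 1) := by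
    intro i j
    ext a b
    exact congrFun (congrFun h (i, a)) (j, b)
  rw [Matrix.matrix_eq_sum_single M]
  simp only [map_sum]
  refine Finset.sum_congr rfl fun i _ => Finset.sum_congr rfl fun j _ => ?_
  have e : (Matrix.single i j (M i j) : Matrix ι ι ℂ)
      = M i j • Matrix.single i j 1 := by
    simp
  rw [e, Φ.map_smul, Ψ.map_smul, hstd]


/-- A supermap is MISC (`Δ_B ∘ Θ ∘ Δ_A = Θ ∘ Δ_A`) iff the full dephasing of its
Choi matrix agrees with the partial `A`-dephasing of its Choi matrix. -/
theorem MISC_iff_choi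
    [Fintype A0] [DecidableEq A0] [Nonempty A0]
    [Fintype A1] [DecidableEq A1] [Nonempty A1]
    [Fintype B0] [DecidableEq B0] [Nonempty B0]
    [Fintype B1] [DecidableEq B1] [Nonempty B1]
    (Θ : (Matrix A0 A0 ℂ →ₗ[ℂ] Matrix A1 A1 ℂ) →ₗ[ℂ] (Matrix B0 B0 ℂ →ₗ[ℂ] Matrix B1 B1 ℂ)) :
    (∀ N : Matrix A0 A0 ℂ →ₗ[ℂ] Matrix A1 A1 ℂ,
        deph ∘ₗ (Θ (deph ∘ₗ N ∘ₗ deph)) ∘ₗ deph = Θ (deph ∘ₗ N ∘ₗ deph)) ↔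
      deph (superChoi fun N => Θ N) = dephFst (superChoi fun N => Θ N) := by
  constructor
  · intro h
    ext ⟨⟨i, k⟩, b⟩ ⟨⟨j, l⟩, b'⟩
    simp only [deph_apply, dephFst, Matrix.of_apply]
    by_cases hA : ((i, k) : A0 × A1) = (j, l)
    · obtain ⟨rfl, rfl⟩ : i = j ∧ k = l := Prod.mk.injEq i k j l ▸ hA
      rw [if_pos rfl]
      by_cases hb : b = b'
      · rw [if_pos (by rw [hb])]
      · rw [if_neg (by simp [Prod.ext_iff, hb])]
        have hΦ : deph ∘ₗ Θ (basisMap i i k k) ∘ₗ deph = Θ (basisMap i i k k) := by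
          have := h (basisMap i i k k)
          rwa [deph_basisMap] at this
        rw [superChoi_apply, ← hΦ, choi_deph, if_neg hb]
    · rw [if_neg hA, if_neg (by simp [Prod.ext_iff] at hA ⊢; tauto)]
  · intro hc N
    have key : ∀ (i : A0) (k : A1),
        deph ∘ₗ Θ (basisMap i i k k) ∘ₗ deph = Θ (basisMap i i k k) := by
      intro i k
      apply choi_inj
      ext b b'
      rw [choi_deph]
      by_cases hb : b = b'
      · rw [if_pos hb, hb]
      · rw [if_neg hb]
        have h2 := congrFun (congrFun hc ((i, k), b)) ((i, k), b')
        simp only [deph_apply, dephFst, Matrix.of_apply, if_pos rfl] at h2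
        rw [if_neg (by simp [Prod.ext_iff, hb]), superChoi_apply] at h2
        exact h2
    rw [deph_comp_decomp N, map_sum]
    apply LinearMap.ext; intro ρ
    simp only [LinearMap.comp_apply, LinearMap.sum_apply, map_sum, _root_.map_smul,
      LinearMap.smul_apply]
    refine Finset.sum_congr rfl fun i _ => Finset.sum_congr rfl fun k _ => ?_
    congr 1
    exact LinearMap.congr_fun (key i k) ρ

end
end

section
/- Let A0, A1, B0, B1 be nonempty finite index types, and for a quantum channel N define the dephasing robustness r_Δ(N) := sInf {t : ℝ | 0 ≤ t ∧ (t • 𝒟_{full}(J(N)) − J(N)).PosSemidef}, where 𝒟_{full} is the full dephasing on the Choi index. Then for all quantum channels N from Matrix A0 A0 ℂ to Matrix A1 A1 ℂ and M from Matrix B0 B0 ℂ to Matrix B1 B1 ℂ, r_Δ(N ⊗ M) = r_Δ(N) · r_Δ(M), where N ⊗ M is the tensor-product channel. (The dephasing log-robustness LR_Δ = log₂ r_Δ is additive under tensor products.) -/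
open Matrix Kronecker ComplexOrder

noncomputable section

/-- Completely positive: the Choi matrix is positive semidefinite. -/
def IsCP {ι κ : Type*} [Fintype ι] [DecidableEq ι] [Fintype κ]
    (Φ : Matrix ι ι ℂ →ₗ[ℂ] Matrix κ κ ℂ) : Prop := (choi Φ).PosSemidef

/-- Trace preserving. -/
def IsTP {ι κ : Type*} [Fintype ι] [Fintype κ]
    (Φ : Matrix ι ι ℂ →ₗ[ℂ] Matrix κ κ ℂ) : Prop := ∀ X, (Φ X).trace = X.trace

/-- Quantum channel: CP and TP. -/
def IsChannel {ι κ : Type*} [Fintype ι] [DecidableEq ι] [Fintype κ]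
    (Φ : Matrix ι ι ℂ →ₗ[ℂ] Matrix κ κ ℂ) : Prop := IsCP Φ ∧ IsTP Φ

/-- Max-relative robustness `r(X‖Y)` between two maps. -/
def maxRelRobust {ι κ : Type*} [Fintype ι] [DecidableEq ι] [Fintype κ]
    (X Y : Matrix ι ι ℂ →ₗ[ℂ] Matrix κ κ ℂ) : ℝ :=
  sInf {t : ℝ | 0 ≤ t ∧ (t • choi Y - choi X).PosSemidef}

section basic
variable {n : Type*} [Fintype n] [DecidableEq n]

lemma deph_apply_s11 (M : Matrix n n ℂ) (i j : n) : deph M i j = if i = j then M i j else 0 := rfl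

lemma deph_eq_diagonal (M : Matrix n n ℂ) : deph M = Matrix.diagonal (fun i => M i i) := by
  ext i j
  by_cases h : i = j <;> simp [deph_apply_s11, Matrix.diagonal_apply, h]

lemma real_smul_matrix (t : ℝ) (M : Matrix n n ℂ) : t • M = (t : ℂ) • M := by
  ext i j; simp [Matrix.smul_apply, Complex.real_smul]

/-- quadratic form, real part -/
def qf (M : Matrix n n ℂ) (x : n → ℂ) : ℝ := (star x ⬝ᵥ M *ᵥ x).re

lemma quad_real {M : Matrix n n ℂ} (hM : M.IsHermitian) (x : n → ℂ) :
    star x ⬝ᵥ M *ᵥ x = (qf M x : ℂ) := by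
  have h : star (star x ⬝ᵥ M *ᵥ x) = star x ⬝ᵥ M *ᵥ x := by
    calc star (star x ⬝ᵥ M *ᵥ x) = star (M *ᵥ x) ⬝ᵥ star (star x) :=
          (star_dotProduct_star _ _).symm
    _ = (star x ᵥ* Mᴴ) ⬝ᵥ x := by rw [star_mulVec, star_star]
    _ = star x ⬝ᵥ M *ᵥ x := by rw [hM.eq, ← dotProduct_mulVec]
  exact (Complex.conj_eq_iff_re.mp h).symm

lemma posSemidef_iff_qf {M : Matrix n n ℂ} (hM : M.IsHermitian) :
    M.PosSemidef ↔ ∀ x, 0 ≤ qf M x := by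
  constructor
  · intro h x; exact h.re_dotProduct_nonneg x
  · intro h
    refine Matrix.PosSemidef.of_dotProduct_mulVec_nonneg hM fun x => ?_
    rw [quad_real hM]
    exact_mod_cast h x

lemma diag_nonneg {M : Matrix n n ℂ} (hM : M.PosSemidef) (i : n) : 0 ≤ M i i := by
  have := hM.dotProduct_mulVec_nonneg (Pi.single i 1)
  simpa [dotProduct, mulVec, Pi.single_apply] using this

lemma deph_posSemidef {M : Matrix n n ℂ} (hM : M.PosSemidef) : (deph M).PosSemidef := by
  rw [deph_eq_diagonal]
  exact Matrix.PosSemidef.diagonal (fun i => diag_nonneg hM i)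

lemma deph_isHermitian {M : Matrix n n ℂ} (hM : M.IsHermitian) : (deph M).IsHermitian := by
  ext i j
  by_cases h : i = j
  · subst h
    have h2 : star (M i i) = M i i :=
      (Matrix.conjTranspose_apply M i i).symm.trans (by rw [hM.eq])
    simp [Matrix.conjTranspose_apply, deph_apply_s11, h2]
  · simp [Matrix.conjTranspose_apply, deph_apply_s11, h, Ne.symm h]

lemma qf_sub_smul {M : Matrix n n ℂ} (t : ℝ) (x : n → ℂ) :
    qf (t • deph M - M) x = t * qf (deph M) x - qf M x := by
  rw [real_smul_matrix]
  simp only [qf, Matrix.sub_mulVec, Matrix.smul_mulVec, dotProduct_sub, dotProduct_smul,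
    Complex.sub_re, smul_eq_mul]
  simp [Complex.ofReal_mul]

end basic

open scoped MatrixOrder in
lemma psd_eq_ctm {n : Type*} [Fintype n] [DecidableEq n] {P : Matrix n n ℂ}
    (hP : P.PosSemidef) : ∃ B : Matrix n n ℂ, P = Bᴴ * B := by
  obtain ⟨B, hB⟩ := CStarAlgebra.nonneg_iff_eq_star_mul_self.mp hP.nonneg
  exact ⟨B, hB⟩

section rob
variable {n : Type*} [Fintype n] [DecidableEq n]

def robSet (P : Matrix n n ℂ) : Set ℝ := {t : ℝ | 0 ≤ t ∧ (t • deph P - P).PosSemidef}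

def rob (P : Matrix n n ℂ) : ℝ := sInf (robSet P)

lemma star_mul_self_c (z : ℂ) : star z * z = (Complex.normSq z : ℂ) := by
  rw [Complex.normSq_eq_conj_mul_self]; rfl

lemma qf_nonneg {M : Matrix n n ℂ} (hM : M.PosSemidef) (x : n → ℂ) : 0 ≤ qf M x := by
  have := hM.dotProduct_mulVec_nonneg x
  simpa [qf] using (Complex.le_def.mp this).1

lemma herm_smul (t : ℝ) {M : Matrix n n ℂ} (hM : M.IsHermitian) : (t • M).IsHermitian := by
  unfold Matrix.IsHermitian
  rw [Matrix.conjTranspose_smul, star_trivial, hM.eq]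

lemma qf_smul (t : ℝ) (M : Matrix n n ℂ) (x : n → ℂ) : qf (t • M) x = t * qf M x := by
  rw [real_smul_matrix]
  simp only [qf, Matrix.smul_mulVec, dotProduct_smul, smul_eq_mul]
  rw [Complex.re_ofReal_mul]

lemma psd_smul {t : ℝ} {M : Matrix n n ℂ} (hM : M.PosSemidef) (ht : 0 ≤ t) :
    (t • M).PosSemidef := by
  refine (posSemidef_iff_qf (herm_smul t hM.1)).mpr fun x => ?_
  rw [qf_smul]
  exact mul_nonneg ht (qf_nonneg hM x)

lemma qf_deph (M : Matrix n n ℂ) (x : n → ℂ) :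
    qf (deph M) x = ∑ i, (M i i * (Complex.normSq (x i) : ℂ)).re := by
  rw [qf, deph_eq_diagonal]
  simp only [dotProduct, Matrix.mulVec_diagonal, Pi.star_apply]
  rw [Complex.re_sum]
  refine Finset.sum_congr rfl fun i _ => ?_
  rw [show star (x i) * (M i i * x i) = M i i * (star (x i) * x i) by ring, star_mul_self_c]

lemma mem_robSet_iff {P : Matrix n n ℂ} (hP : P.PosSemidef) {t : ℝ} :
    t ∈ robSet P ↔ 0 ≤ t ∧ ∀ x, qf P x ≤ t * qf (deph P) x := by
  have hherm : (t • deph P - P).IsHermitian :=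
    (herm_smul t (deph_isHermitian hP.1)).sub hP.1
  constructor
  · rintro ⟨ht, hpsd⟩
    refine ⟨ht, fun x => ?_⟩
    have := qf_nonneg hpsd x
    rw [qf_sub_smul] at this
    linarith
  · rintro ⟨ht, h⟩
    refine ⟨ht, (posSemidef_iff_qf hherm).mpr fun x => ?_⟩
    rw [qf_sub_smul]
    linarith [h x]

lemma card_mem_robSet {P : Matrix n n ℂ} (hP : P.PosSemidef) :
    (Fintype.card n : ℝ) ∈ robSet P := by
  obtain ⟨B, rfl⟩ := psd_eq_ctm hP
  refine (mem_robSet_iff hP).mpr ⟨Nat.cast_nonneg _, fun x => ?_⟩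
  have hqf : qf (Bᴴ * B) x = ∑ k, Complex.normSq ((B *ᵥ x) k) := by
    rw [qf, ← Matrix.mulVec_mulVec, Matrix.dotProduct_mulVec (star x),
      Matrix.vecMul_conjTranspose, star_star]
    simp only [dotProduct, Pi.star_apply]
    rw [Complex.re_sum]
    refine Finset.sum_congr rfl fun k _ => ?_
    rw [star_mul_self_c]
    simp
  have hdiag : ∀ i, (Bᴴ * B) i i = ((∑ k, Complex.normSq (B k i) : ℝ) : ℂ) := by
    intro i
    simp only [Matrix.mul_apply, Matrix.conjTranspose_apply]
    push_cast
    refine Finset.sum_congr rfl fun k _ => ?_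
    rw [star_mul_self_c]
  have hqfD : qf (deph (Bᴴ * B)) x
      = ∑ i, (∑ k, Complex.normSq (B k i)) * Complex.normSq (x i) := by
    rw [qf_deph]
    refine Finset.sum_congr rfl fun i _ => ?_
    rw [hdiag i, ← Complex.ofReal_mul]
    exact Complex.ofReal_re _
  rw [hqf, hqfD]
  have key : ∀ k, Complex.normSq ((B *ᵥ x) k)
      ≤ (Fintype.card n : ℝ) * ∑ i, Complex.normSq (B k i) * Complex.normSq (x i) := by
    intro k
    have h1 : ‖(B *ᵥ x) k‖ ≤ ∑ i, ‖B k i * x i‖ := by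
      rw [Matrix.mulVec, dotProduct]
      exact norm_sum_le _ _
    have h2 : Complex.normSq ((B *ᵥ x) k) ≤ (∑ i, ‖B k i * x i‖) ^ 2 := by
      rw [Complex.normSq_eq_norm_sq]
      exact pow_le_pow_left₀ (norm_nonneg _) h1 2
    have h3 : (∑ i, ‖B k i * x i‖) ^ 2
        ≤ (Fintype.card n : ℝ) * ∑ i, ‖B k i * x i‖ ^ 2 := by
      simpa using sq_sum_le_card_mul_sum_sq (s := Finset.univ) (f := fun i => ‖B k i * x i‖)
    refine h2.trans (h3.trans (le_of_eq ?_))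
    have he : ∀ i : n, ‖B k i * x i‖ ^ 2 = Complex.normSq (B k i) * Complex.normSq (x i) :=
      fun i => by
        rw [norm_mul, mul_pow, Complex.normSq_eq_norm_sq, Complex.normSq_eq_norm_sq]
    simp_rw [he]
  calc ∑ k, Complex.normSq ((B *ᵥ x) k)
      ≤ ∑ k, (Fintype.card n : ℝ) * ∑ i, Complex.normSq (B k i) * Complex.normSq (x i) :=
        Finset.sum_le_sum fun k _ => key k
    _ = (Fintype.card n : ℝ) * ∑ k, ∑ i, Complex.normSq (B k i) * Complex.normSq (x i) := by
        rw [Finset.mul_sum]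
    _ = (Fintype.card n : ℝ) * ∑ i, ∑ k, Complex.normSq (B k i) * Complex.normSq (x i) := by
        rw [Finset.sum_comm]
    _ = (Fintype.card n : ℝ) * ∑ i, (∑ k, Complex.normSq (B k i)) * Complex.normSq (x i) := by
        congr 1
        exact Finset.sum_congr rfl fun i _ => by rw [Finset.sum_mul]

lemma robSet_bddBelow (P : Matrix n n ℂ) : BddBelow (robSet P) := ⟨0, fun t ht => ht.1⟩

lemma rob_nonneg {P : Matrix n n ℂ} (hP : P.PosSemidef) : 0 ≤ rob P :=
  le_csInf ⟨_, card_mem_robSet hP⟩ fun _ ht => ht.1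

lemma rob_mem {P : Matrix n n ℂ} (hP : P.PosSemidef) : rob P ∈ robSet P := by
  have hclosed : IsClosed (robSet P) := by
    have : robSet P = Set.Ici 0 ∩ ⋂ x : n → ℂ, {t : ℝ | qf P x ≤ t * qf (deph P) x} := by
      ext t
      simp only [Set.mem_inter_iff, Set.mem_Ici, Set.mem_iInter, Set.mem_setOf_eq]
      exact mem_robSet_iff hP
    rw [this]
    exact isClosed_Ici.inter (isClosed_iInter fun x =>
      isClosed_le continuous_const (continuous_id.mul continuous_const))
  exact hclosed.csInf_mem ⟨_, card_mem_robSet hP⟩ (robSet_bddBelow P)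

lemma rob_le_of_mem {P : Matrix n n ℂ} {t : ℝ} (ht : t ∈ robSet P) : rob P ≤ t :=
  csInf_le (robSet_bddBelow P) ht

end rob
section kron
variable {n m : Type*} [Fintype n] [DecidableEq n] [Fintype m] [DecidableEq m]

lemma kron_conjTranspose (A : Matrix n n ℂ) (B : Matrix m m ℂ) :
    (A ⊗ₖ B)ᴴ = Aᴴ ⊗ₖ Bᴴ := by
  ext ⟨i, j⟩ ⟨k, l⟩
  simp [Matrix.conjTranspose_apply, Matrix.kroneckerMap_apply, star_mul']

lemma psd_kron {A : Matrix n n ℂ} {B : Matrix m m ℂ}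
    (hA : A.PosSemidef) (hB : B.PosSemidef) : (A ⊗ₖ B).PosSemidef := by
  obtain ⟨C, rfl⟩ := psd_eq_ctm hA
  obtain ⟨E, rfl⟩ := psd_eq_ctm hB
  rw [Matrix.mul_kronecker_mul, ← kron_conjTranspose]
  exact Matrix.posSemidef_conjTranspose_mul_self _

lemma deph_kron (A : Matrix n n ℂ) (B : Matrix m m ℂ) :
    deph (A ⊗ₖ B) = deph A ⊗ₖ deph B := by
  ext ⟨i, j⟩ ⟨k, l⟩
  by_cases hik : i = k <;> by_cases hjl : j = l <;>
    simp [deph_apply_s11, Matrix.kroneckerMap_apply, Prod.ext_iff, hik, hjl]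

lemma kron_mulVec (A : Matrix n n ℂ) (B : Matrix m m ℂ) (x : n → ℂ) (y : m → ℂ) :
    (A ⊗ₖ B) *ᵥ (fun p : n × m => x p.1 * y p.2)
      = fun p : n × m => (A *ᵥ x) p.1 * (B *ᵥ y) p.2 := by
  funext ⟨i, j⟩
  simp only [Matrix.mulVec, dotProduct, Matrix.kroneckerMap_apply]
  rw [← Finset.univ_product_univ, Finset.sum_product, Finset.sum_mul_sum]
  refine Finset.sum_congr rfl fun k _ => Finset.sum_congr rfl fun l _ => by ring

lemma dot_kron (a c : n → ℂ) (b d : m → ℂ) :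
    (fun p : n × m => a p.1 * b p.2) ⬝ᵥ (fun p : n × m => c p.1 * d p.2)
      = (a ⬝ᵥ c) * (b ⬝ᵥ d) := by
  simp only [dotProduct]
  rw [← Finset.univ_product_univ, Finset.sum_product, Finset.sum_mul_sum]
  refine Finset.sum_congr rfl fun k _ => Finset.sum_congr rfl fun l _ => by ring

lemma qf_kron {A : Matrix n n ℂ} {B : Matrix m m ℂ}
    (hA : A.IsHermitian) (hB : B.IsHermitian) (x : n → ℂ) (y : m → ℂ) :
    qf (A ⊗ₖ B) (fun p : n × m => x p.1 * y p.2) = qf A x * qf B y := by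
  have hstar : star (fun p : n × m => x p.1 * y p.2)
      = fun p : n × m => star (x p.1) * star (y p.2) := by
    funext p
    simp [star_mul']
  have : star (fun p : n × m => x p.1 * y p.2) ⬝ᵥ (A ⊗ₖ B) *ᵥ (fun p : n × m => x p.1 * y p.2)
      = (star x ⬝ᵥ A *ᵥ x) * (star y ⬝ᵥ B *ᵥ y) := by
    rw [kron_mulVec, hstar]
    exact dot_kron (star x) (A *ᵥ x) (star y) (B *ᵥ y)
  rw [qf, this, quad_real hA, quad_real hB, ← Complex.ofReal_mul]
  exact Complex.ofReal_re _

end kron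
section witness
variable {n : Type*} [Fintype n] [DecidableEq n]

lemma dot_self_c (z : n → ℂ) :
    star z ⬝ᵥ z = ((∑ i, Complex.normSq (z i) : ℝ) : ℂ) := by
  push_cast
  simp only [dotProduct, Pi.star_apply]
  exact Finset.sum_congr rfl fun i _ => star_mul_self_c (z i)

lemma qf_deph_re {P : Matrix n n ℂ} (hP : P.IsHermitian) (x : n → ℂ) :
    qf (deph P) x = ∑ i, (P i i).re * Complex.normSq (x i) := by
  rw [qf_deph]
  refine Finset.sum_congr rfl fun i _ => ?_
  have hreal : P i i = ((P i i).re : ℂ) :=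
    (Complex.conj_eq_iff_re.mp
      ((Matrix.conjTranspose_apply P i i).symm.trans (congrFun (congrFun hP.eq i) i))).symm
  rw [hreal, ← Complex.ofReal_mul, Complex.ofReal_re, Complex.ofReal_re]

lemma eps_lemma {P A : Matrix n n ℂ} (hP : P.PosSemidef) (hA : A.PosSemidef)
    (hker : ∀ x, A *ᵥ x = 0 → deph P *ᵥ x = 0) :
    ∃ ε : ℝ, 0 < ε ∧ ∀ x, ε * qf (deph P) x ≤ qf A x := by
  rcases isEmpty_or_nonempty n with hn | hn
  · refine ⟨1, one_pos, fun x => ?_⟩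
    simp [qf, dotProduct]
  -- setup
  have hherm := hA.1
  set U : Matrix n n ℂ := (hherm.eigenvectorUnitary : Matrix n n ℂ) with hU
  set lam : n → ℝ := hherm.eigenvalues with hlamdef
  have hlam : ∀ i, 0 ≤ lam i := hA.eigenvalues_nonneg
  have hUU : U * star U = 1 := (Matrix.mem_unitaryGroup_iff).mp hherm.eigenvectorUnitary.2
  have hU'U : star U * U = 1 := (Matrix.mem_unitaryGroup_iff').mp hherm.eigenvectorUnitary.2
  set μ : ℝ := Finset.univ.inf' Finset.univ_nonempty (fun i => if lam i = 0 then 1 else lam i)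
    with hμdef
  have hμpos : 0 < μ := by
    rw [hμdef, Finset.lt_inf'_iff]
    intro i _
    by_cases h : lam i = 0
    · simp [h]
    · simp only [h, if_false]
      exact lt_of_le_of_ne (hlam i) (Ne.symm h)
  set T : ℝ := ∑ i, (P i i).re with hTdef
  have hdre : ∀ i, 0 ≤ (P i i).re := fun i => (Complex.le_def.mp (diag_nonneg hP i)).1
  have hT : 0 ≤ T := Finset.sum_nonneg fun i _ => hdre i
  refine ⟨μ / (T + 1), div_pos hμpos (by linarith), fun x => ?_⟩
  -- decomposition
  set y : n → ℂ := star U *ᵥ x with hy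
  have hxy : U *ᵥ y = x := by rw [hy, Matrix.mulVec_mulVec, hUU, Matrix.one_mulVec]
  set y1 : n → ℂ := fun i => if lam i = 0 then 0 else y i with hy1
  set x1 : n → ℂ := U *ᵥ y1 with hx1
  have hstary : star x ᵥ* U = star y := by
    rw [hy, Matrix.star_mulVec, Matrix.star_eq_conjTranspose,
      Matrix.conjTranspose_conjTranspose]
  have hAvU : ∀ v : n → ℂ, A *ᵥ (U *ᵥ v)
      = U *ᵥ (fun i => ((lam i : ℂ)) * v i) := by
    intro v
    conv_lhs => rw [hherm.spectral_theorem, Unitary.conjStarAlgAut_apply]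
    rw [← hU, ← hlamdef, Matrix.mulVec_mulVec, mul_assoc, mul_assoc, hU'U, mul_one,
      ← Matrix.mulVec_mulVec]
    have hdv : Matrix.diagonal (RCLike.ofReal ∘ lam) *ᵥ v = fun i => ((lam i : ℂ)) * v i := by
      funext i
      rw [Matrix.mulVec_diagonal]
      rfl
    rw [hdv]
  -- A *ᵥ (x - x1) = 0
  have hx0 : x - x1 = U *ᵥ (y - y1) := by
    rw [Matrix.mulVec_sub, hxy]
  have hA0 : A *ᵥ (x - x1) = 0 := by
    rw [hx0, hAvU]
    rw [show (fun i => ((lam i : ℂ)) * (y - y1) i) = 0 by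
      funext i
      by_cases h : lam i = 0 <;> simp [hy1, h, Pi.sub_apply]]
    exact Matrix.mulVec_zero U
  have hD0 : deph P *ᵥ (x - x1) = 0 := hker _ hA0
  -- qf (deph P) x = qf (deph P) x1
  have hDx : deph P *ᵥ x = deph P *ᵥ x1 := by
    have h2 : deph P *ᵥ x - deph P *ᵥ x1 = 0 := by
      rw [← Matrix.mulVec_sub, hD0]
    exact sub_eq_zero.mp h2
  have hcross : star (x - x1) ⬝ᵥ deph P *ᵥ x1 = 0 := by
    have hh : star (x - x1) ᵥ* deph P = star (deph P *ᵥ (x - x1)) := by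
      rw [Matrix.star_mulVec, (deph_isHermitian hP.1).eq]
    rw [Matrix.dotProduct_mulVec, hh, hD0]
    simp
  have hqDeq : qf (deph P) x = qf (deph P) x1 := by
    unfold qf
    rw [hDx]
    have : star x ⬝ᵥ deph P *ᵥ x1
        = star (x - x1) ⬝ᵥ deph P *ᵥ x1 + star x1 ⬝ᵥ deph P *ᵥ x1 := by
      rw [← add_dotProduct, ← star_add]
      congr 2
      abel
    rw [this, hcross, zero_add]
  -- norm transfer
  have hnorm : ∑ i, Complex.normSq (x1 i) = ∑ i, Complex.normSq (y1 i) := by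
    have hU'U2 : Uᴴ * U = 1 := hU'U
    have h1 : star x1 ⬝ᵥ x1 = star y1 ⬝ᵥ y1 := by
      rw [hx1, Matrix.star_mulVec, ← Matrix.dotProduct_mulVec, Matrix.mulVec_mulVec,
        hU'U2, Matrix.one_mulVec]
    rw [dot_self_c x1, dot_self_c y1] at h1
    exact_mod_cast h1
  -- qf A x
  have hqA : qf A x = ∑ i, lam i * Complex.normSq (y i) := by
    have hAx : A *ᵥ x = U *ᵥ (fun i => ((lam i : ℂ)) * y i) := by
      conv_lhs => rw [← hxy]
      exact hAvU y
    unfold qf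
    rw [hAx, Matrix.dotProduct_mulVec, hstary]
    rw [show star y ⬝ᵥ (fun i => ((lam i : ℂ)) * y i)
        = ((∑ i, lam i * Complex.normSq (y i) : ℝ) : ℂ) by
      push_cast
      simp only [dotProduct, Pi.star_apply]
      refine Finset.sum_congr rfl fun i _ => ?_
      rw [show star (y i) * (((lam i : ℝ) : ℂ) * y i)
          = ((lam i : ℝ) : ℂ) * (star (y i) * y i) by ring, star_mul_self_c]]
    exact Complex.ofReal_re _
  -- chain
  have hy1sum : ∑ i, Complex.normSq (y1 i)
      = ∑ i, (if lam i = 0 then 0 else Complex.normSq (y i)) := by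
    refine Finset.sum_congr rfl fun i _ => ?_
    by_cases h : lam i = 0 <;> simp [hy1, h]
  have hμle : μ * ∑ i, Complex.normSq (y1 i) ≤ qf A x := by
    rw [hqA, hy1sum, Finset.mul_sum]
    refine Finset.sum_le_sum fun i _ => ?_
    by_cases h : lam i = 0
    · simp [h, mul_nonneg (hlam i) (Complex.normSq_nonneg _)]
    · simp only [h, if_false]
      refine mul_le_mul_of_nonneg_right ?_ (Complex.normSq_nonneg _)
      exact (Finset.inf'_le _ (Finset.mem_univ i)).trans_eq (if_neg h)
  have hqDle : qf (deph P) x ≤ T * ∑ i, Complex.normSq (y1 i) := by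
    rw [hqDeq, qf_deph_re hP.1, ← hnorm, Finset.mul_sum]
    refine Finset.sum_le_sum fun i _ => ?_
    refine mul_le_mul_of_nonneg_right ?_ (Complex.normSq_nonneg _)
    exact Finset.single_le_sum (fun j _ => hdre j) (Finset.mem_univ i)
  have hsumnn : 0 ≤ ∑ i, Complex.normSq (y1 i) :=
    Finset.sum_nonneg fun i _ => Complex.normSq_nonneg _
  calc μ / (T + 1) * qf (deph P) x
      ≤ μ / (T + 1) * (T * ∑ i, Complex.normSq (y1 i)) := by
        refine mul_le_mul_of_nonneg_left hqDle (le_of_lt (div_pos hμpos (by linarith)))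
    _ ≤ μ * ∑ i, Complex.normSq (y1 i) := by
        rw [div_mul_eq_mul_div, div_le_iff₀ (by linarith : (0:ℝ) < T + 1)]
        nlinarith [mul_nonneg hμpos.le hsumnn]
    _ ≤ qf A x := hμle

end witness
section main
variable {n m : Type*} [Fintype n] [DecidableEq n] [Fintype m] [DecidableEq m]

lemma exists_witness {P : Matrix n n ℂ} (hP : P.PosSemidef) (hpos : 0 < rob P) :
    ∃ x, qf P x = rob P * qf (deph P) x ∧ 0 < qf (deph P) x := by
  by_contra hcon
  push_neg at hcon
  set r := rob P with hr
  have hmem := rob_mem hP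
  have hA : (r • deph P - P).PosSemidef := hmem.2
  have hineq := ((mem_robSet_iff hP).mp hmem).2
  have hker : ∀ x, (r • deph P - P) *ᵥ x = 0 → deph P *ᵥ x = 0 := by
    intro x hx
    have h1 : qf (r • deph P - P) x = 0 := by
      rw [qf, hx]
      simp
    rw [qf_sub_smul] at h1
    have h2 : qf P x = r * qf (deph P) x := by linarith
    have h3 := hcon x h2
    have h4 : qf (deph P) x = 0 :=
      le_antisymm h3 (qf_nonneg (deph_posSemidef hP) x)
    have h5 : star x ⬝ᵥ deph P *ᵥ x = 0 := by
      rw [quad_real (deph_isHermitian hP.1), h4]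
      simp
    exact ((deph_posSemidef hP).dotProduct_mulVec_zero_iff x).mp h5
  obtain ⟨ε, hε, hleq⟩ := eps_lemma hP hA hker
  set ε' := min ε r with hε'
  have hmem' : (r - ε') ∈ robSet P := by
    refine (mem_robSet_iff hP).mpr ⟨by
      have := min_le_right ε r
      simp only [hε', sub_nonneg]
      exact this, fun x => ?_⟩
    have h6 := hleq x
    rw [qf_sub_smul] at h6
    have h7 : 0 ≤ qf (deph P) x := qf_nonneg (deph_posSemidef hP) x
    have h8 : ε' ≤ ε := min_le_left ε r
    nlinarith
  have h9 := rob_le_of_mem hmem'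
  have h10 : 0 < ε' := lt_min hε hpos
  rw [← hr] at h9
  linarith

theorem rob_kron {P : Matrix n n ℂ} {Q : Matrix m m ℂ}
    (hP : P.PosSemidef) (hQ : Q.PosSemidef) :
    rob (P ⊗ₖ Q) = rob P * rob Q := by
  have hPQ : (P ⊗ₖ Q).PosSemidef := psd_kron hP hQ
  have hmemP := rob_mem hP
  have hmemQ := rob_mem hQ
  have hrP := rob_nonneg hP
  have hrQ := rob_nonneg hQ
  -- key algebraic identity
  have hkey : (rob P * rob Q) • deph (P ⊗ₖ Q) - P ⊗ₖ Q
      = (rob P • deph P - P) ⊗ₖ (rob Q • deph Q) + P ⊗ₖ (rob Q • deph Q - Q) := by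
    rw [deph_kron]
    ext ⟨i, j⟩ ⟨k, l⟩
    simp only [Matrix.sub_apply, Matrix.add_apply, Matrix.smul_apply,
      Matrix.kroneckerMap_apply, smul_eq_mul, Complex.real_smul]
    push_cast
    ring
  refine le_antisymm ?_ ?_
  · -- upper bound
    refine rob_le_of_mem ⟨mul_nonneg hrP hrQ, ?_⟩
    rw [hkey]
    exact (psd_kron hmemP.2 (psd_smul (deph_posSemidef hQ) hrQ)).add
      (psd_kron hP hmemQ.2)
  · -- lower bound
    refine le_csInf ⟨_, card_mem_robSet hPQ⟩ fun t ht => ?_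
    rcases eq_or_lt_of_le hrP with hP0 | hPpos
    · rw [← hP0, zero_mul]
      exact ht.1
    rcases eq_or_lt_of_le hrQ with hQ0 | hQpos
    · rw [← hQ0, mul_zero]
      exact ht.1
    obtain ⟨x, hx1, hx2⟩ := exists_witness hP hPpos
    obtain ⟨y, hy1, hy2⟩ := exists_witness hQ hQpos
    have hineq := ((mem_robSet_iff hPQ).mp ht).2 (fun p : n × m => x p.1 * y p.2)
    rw [qf_kron hP.1 hQ.1 x y, deph_kron,
      qf_kron (deph_isHermitian hP.1) (deph_isHermitian hQ.1) x y, hx1, hy1] at hineq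
    have hprod : 0 < qf (deph P) x * qf (deph Q) y := mul_pos hx2 hy2
    have := (mul_le_mul_iff_of_pos_right hprod).mp (by nlinarith : (rob P * rob Q) * (qf (deph P) x * qf (deph Q) y) ≤ t * (qf (deph P) x * qf (deph Q) y))
    exact this

end main
section glue

lemma stdBasis_kron {A0 B0 : Type*} [DecidableEq A0] [DecidableEq B0]
    (i j : A0) (k l : B0) :
    Matrix.single (i, k) (j, l) (1 : ℂ)
      = Matrix.single i j (1 : ℂ) ⊗ₖ Matrix.single k l (1 : ℂ) := by
  ext ⟨a, b⟩ ⟨c, d⟩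
  simp only [Matrix.single, Matrix.of_apply, Matrix.kroneckerMap_apply, Prod.mk.injEq]
  split_ifs <;> simp_all

lemma deph_submatrix {n m : Type*} [DecidableEq n] [DecidableEq m]
    (J : Matrix n n ℂ) (e : m ≃ n) :
    deph (J.submatrix e e) = (deph J).submatrix e e := by
  ext i j
  by_cases h : i = j
  · simp [deph_apply_s11, Matrix.submatrix_apply, h]
  · have : (e i : n) ≠ e j := fun hc => h (e.injective hc)
    simp [deph_apply_s11, Matrix.submatrix_apply, h, this]

lemma robSet_submatrix {n m : Type*} [Fintype n] [DecidableEq n] [Fintype m] [DecidableEq m]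
    (J : Matrix n n ℂ) (e : m ≃ n) :
    robSet (J.submatrix e e) = robSet J := by
  ext t
  have hmat : t • deph (J.submatrix e e) - J.submatrix e e
      = (t • deph J - J).submatrix e e := by
    rw [deph_submatrix]
    ext i j
    simp [Matrix.submatrix_apply, Matrix.sub_apply, Matrix.smul_apply]
  simp only [robSet, Set.mem_setOf_eq, hmat]
  rw [Matrix.posSemidef_submatrix_equiv e]

lemma rob_submatrix {n m : Type*} [Fintype n] [DecidableEq n] [Fintype m] [DecidableEq m]
    (J : Matrix n n ℂ) (e : m ≃ n) : rob (J.submatrix e e) = rob J := by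
  unfold rob
  rw [robSet_submatrix]

lemma choi_tensor
    {A0 A1 B0 B1 : Type*}
    [Fintype A0] [DecidableEq A0] [Fintype A1] [DecidableEq A1]
    [Fintype B0] [DecidableEq B0] [Fintype B1] [DecidableEq B1]
    (N : Matrix A0 A0 ℂ →ₗ[ℂ] Matrix A1 A1 ℂ)
    (M : Matrix B0 B0 ℂ →ₗ[ℂ] Matrix B1 B1 ℂ)
    (NM : Matrix (A0 × B0) (A0 × B0) ℂ →ₗ[ℂ] Matrix (A1 × B1) (A1 × B1) ℂ)
    (hNM : ∀ (X : Matrix A0 A0 ℂ) (Y : Matrix B0 B0 ℂ), NM (X ⊗ₖ Y) = (N X) ⊗ₖ (M Y)) :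
    choi NM = (choi N ⊗ₖ choi M).submatrix
      (Equiv.prodProdProdComm A0 B0 A1 B1) (Equiv.prodProdProdComm A0 B0 A1 B1) := by
  ext ⟨⟨a0, b0⟩, ⟨a1, b1⟩⟩ ⟨⟨a0', b0'⟩, ⟨a1', b1'⟩⟩
  show NM (Matrix.single (a0, b0) (a0', b0') 1) (a1, b1) (a1', b1') = _
  rw [stdBasis_kron, hNM]
  simp only [Matrix.submatrix_apply, Equiv.prodProdProdComm_apply, Matrix.kroneckerMap_apply]
  rfl

end glue

/-- Dephasing robustness `r_Δ(N)`. -/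
def dephRobust {ι κ : Type*} [Fintype ι] [DecidableEq ι] [Fintype κ] [DecidableEq κ]
    (N : Matrix ι ι ℂ →ₗ[ℂ] Matrix κ κ ℂ) : ℝ :=
  sInf {t : ℝ | 0 ≤ t ∧ (t • deph (choi N) - choi N).PosSemidef}

/-- The dephasing (log-)robustness is additive (the robustness is multiplicative)
under tensor products of channels. -/
theorem dephRobust_tensor
    {A0 A1 B0 B1 : Type*}
    [Fintype A0] [DecidableEq A0] [Nonempty A0]
    [Fintype A1] [DecidableEq A1] [Nonempty A1]
    [Fintype B0] [DecidableEq B0] [Nonempty B0]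
    [Fintype B1] [DecidableEq B1] [Nonempty B1]
    (N : Matrix A0 A0 ℂ →ₗ[ℂ] Matrix A1 A1 ℂ)
    (M : Matrix B0 B0 ℂ →ₗ[ℂ] Matrix B1 B1 ℂ)
    (hN : IsChannel N) (hM : IsChannel M)
    (NM : Matrix (A0 × B0) (A0 × B0) ℂ →ₗ[ℂ] Matrix (A1 × B1) (A1 × B1) ℂ)
    (hNM : ∀ (X : Matrix A0 A0 ℂ) (Y : Matrix B0 B0 ℂ), NM (X ⊗ₖ Y) = (N X) ⊗ₖ (M Y)) :
    dephRobust NM = dephRobust N * dephRobust M := by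
  have h1 : dephRobust NM = rob (choi NM) := rfl
  have h2 : dephRobust N = rob (choi N) := rfl
  have h3 : dephRobust M = rob (choi M) := rfl
  have hcpN : (choi N).PosSemidef := hN.1
  have hcpM : (choi M).PosSemidef := hM.1
  rw [h1, h2, h3, choi_tensor N M NM hNM,
    rob_submatrix _ (Equiv.prodProdProdComm A0 B0 A1 B1), rob_kron hcpN hcpM]

end
end
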